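/- Suppose 𝒢 has exactly two zealots, with fixed opinions −1 and +1, every persuadable node is adjacent to both zealots, and the subgraph induced on the persuadable nodes 𝒫 is d-regular. Let L_𝒫 be the combinatorial Laplacian of the persuadable subgraph, and write u = ω(0) and v = ω(1) (both depending on γ). Then: (1) if δ > 1, there exists Γ such that for all γ > Γ the harmonic state x̄ is linearly stable; (2) if δ = 1, then for every eigenvalue λ of L_𝒫 there exists Γ such that for all γ > Γ one has λ ≤ −2v(1 − 2γ(1 − v))/u; and (3) if 0 ≤ δ < 1, there exists Γ such that for all γ > Γ the only eigenvalue of L_𝒫 satisfying λ ≤ −2v(1 − 2γ(1 − v))/u is λ = 0. -/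

import Mathlib

open Finset Filter

namespace SBCM

variable {V : Type*} [Fintype V] [DecidableEq V]

/-- Sigmoidal influence weight. -/
noncomputable def wt (G : SimpleGraph V) [DecidableRel G.Adj] (γ δ : ℝ) (x : V → ℝ)
    (i j : V) : ℝ :=
  if G.Adj i j then 1 / (1 + Real.exp (γ * (x i - x j) ^ 2 - γ * δ)) else 0

/-- SBCM update operator. -/
noncomputable def F (G : SimpleGraph V) [DecidableRel G.Adj] (Z : Finset V) (γ δ : ℝ)
    (x : V → ℝ) (i : V) : ℝ :=
  if i ∈ Z then 0
  else (∑ j, wt G γ δ x i j * (x j - x i)) / (∑ j, wt G γ δ x i j)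

/-- Jacobian block over the persuadable nodes. -/
noncomputable def Jp (G : SimpleGraph V) [DecidableRel G.Adj] (Z : Finset V) (γ δ : ℝ)
    (x : V → ℝ) : Matrix {v : V // v ∉ Z} {v : V // v ∉ Z} ℝ :=
  fun i j => fderiv ℝ (fun y : V → ℝ => F G Z γ δ y i.val) x (Pi.single (j : V) (1 : ℝ))

/-- `μ` is a (real) eigenvalue of the matrix `M`. -/
def HasEig {n : Type*} [Fintype n] (M : Matrix n n ℝ) (μ : ℝ) : Prop :=
  ∃ φ : n → ℝ, φ ≠ 0 ∧ M.mulVec φ = μ • φ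

/-- All eigenvalues of `M` are strictly negative. -/
def LinStable {n : Type*} [Fintype n] (M : Matrix n n ℝ) : Prop :=
  ∀ μ : ℝ, HasEig M μ → μ < 0

/-- `M` has a strictly positive eigenvalue. -/
def LinUnstable {n : Type*} [Fintype n] (M : Matrix n n ℝ) : Prop :=
  ∃ μ : ℝ, 0 < μ ∧ HasEig M μ

end SBCM

namespace SBCM

/-- The harmonic state of a balanced-exposure graph: zealot `z₁` holds opinion `−1`,
zealot `z₂` holds opinion `+1`, and all persuadable nodes hold opinion `0`. -/
noncomputable def xbarBE {V : Type*} [DecidableEq V] (z₁ z₂ : V) : V → ℝ :=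
  fun v => if v = z₁ then -1 else if v = z₂ then 1 else 0

end SBCM

namespace SBCM

/-- The combinatorial Laplacian of the subgraph induced on the persuadable nodes. -/
noncomputable def Lp {V : Type*} [Fintype V] [DecidableEq V] (G : SimpleGraph V)
    [DecidableRel G.Adj] (Z : Finset V) :
    Matrix {v : V // v ∉ Z} {v : V // v ∉ Z} ℝ :=
  fun i j =>
    (if i = j then
        ((Finset.univ.filter fun k : {v : V // v ∉ Z} => G.Adj i.1 k.1).card : ℝ)
      else 0)
    - (if G.Adj i.1 j.1 then 1 else 0)

end SBCM

/-!
At the harmonic state a persuadable node sees its two zealots at distance `1` and its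
persuadable neighbours at distance `0`. Since `F_i` is a quotient whose numerator vanishes
there, its derivative is the derivative of the numerator divided by `s_i = 2v + du`, and the
numerator weights each difference `h_k - h_i` by the derivative `ℓ(r)` of `r ↦ r ω(r)`. With
`ℓ(0) = u` and `ℓ(±1) = v (1 - 2γ(1 - v))`, regularity gives
`J_𝒫(x̄) = -(2v + du)⁻¹ (2 ℓ(1) I + u L_𝒫)`, so the eigenvalues of `J_𝒫(x̄)` are
`-(2 ℓ(1) + uλ)/(2v + du)` for the eigenvalues `λ ≥ 0` of `L_𝒫`, and the threshold in the
statement is `-2 ℓ(1)/u`.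

Everything then reduces to the size of `γ (1 - v)` and `γ v`. If `δ > 1` then
`1 - v ≤ e^{-(δ-1)γ}`, so `ℓ(1) > 0` for large `γ` and every eigenvalue is negative. If `δ = 1`
then `v = 1/2` and the threshold `(γ - 1)/u ≥ γ - 1` is eventually above any fixed `λ`. If
`δ < 1` the threshold is at most `4γ (e^{-(1-δ)γ} + e^{-γ}) → 0`, hence eventually below the
smallest positive eigenvalue of `L_𝒫`, of which there are finitely many.
-/

theorem HasFDerivAt.div_of_eq_zero {E : Type*} [NormedAddCommGroup E] [NormedSpace ℝ E]
    {f g : E → ℝ} {f' : E →L[ℝ] ℝ} {x : E} (hf : HasFDerivAt f f' x) (hfx : f x = 0)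
    (hg : DifferentiableAt ℝ g x) (hgx : g x ≠ 0) :
    HasFDerivAt (fun y => f y / g y) ((g x)⁻¹ • f') x := by
  simp_rw [div_eq_mul_inv]
  simpa [hfx] using hf.fun_mul (hg.inv hgx).hasFDerivAt

namespace SBCM

noncomputable def ω (γ δ r : ℝ) : ℝ := 1 / (1 + Real.exp (γ * r ^ 2 - γ * δ))

noncomputable def linWeight (γ δ r : ℝ) : ℝ := ω γ δ r * (1 - 2 * γ * r ^ 2 * (1 - ω γ δ r))

theorem ω_neg (γ δ r : ℝ) : ω γ δ (-r) = ω γ δ r := by simp only [ω, neg_sq]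

theorem linWeight_neg (γ δ r : ℝ) : linWeight γ δ (-r) = linWeight γ δ r := by
  simp only [linWeight, ω_neg, neg_sq]

theorem ω_pos (γ δ r : ℝ) : 0 < ω γ δ r := by unfold ω; positivity

theorem ω_lt_one (γ δ r : ℝ) : ω γ δ r < 1 := by
  unfold ω
  rw [div_lt_one (by positivity)]
  linarith [Real.exp_pos (γ * r ^ 2 - γ * δ)]

theorem linWeight_zero (γ δ : ℝ) : linWeight γ δ 0 = ω γ δ 0 := by simp [linWeight]

theorem one_sub_ω (γ δ r : ℝ) :
    1 - ω γ δ r = Real.exp (γ * r ^ 2 - γ * δ) * ω γ δ r := by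
  unfold ω
  field_simp
  ring

theorem hasDerivAt_ω (γ δ r : ℝ) :
    HasDerivAt (ω γ δ) (-(2 * γ * r) * ω γ δ r * (1 - ω γ δ r)) r := by
  have hE : HasDerivAt (fun r => 1 + Real.exp (γ * r ^ 2 - γ * δ))
      (Real.exp (γ * r ^ 2 - γ * δ) * (γ * (2 * r))) r := by
    simpa using ((((hasDerivAt_pow 2 r).const_mul γ).sub_const (γ * δ)).exp).const_add 1
  have hω : ω γ δ = fun r => (1 + Real.exp (γ * r ^ 2 - γ * δ))⁻¹ := by
    funext r; rw [ω, one_div]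
  rw [hω]
  refine (hE.inv (by positivity)).congr_deriv ?_
  rw [← hω, one_sub_ω]
  unfold ω
  field_simp

theorem hasDerivAt_mul_ω (γ δ r : ℝ) :
    HasDerivAt (fun r => r * ω γ δ r) (linWeight γ δ r) r := by
  refine ((hasDerivAt_id' r).mul (hasDerivAt_ω γ δ r)).congr_deriv ?_
  rw [linWeight]
  ring

theorem wt_apply {V : Type*} (G : SimpleGraph V) [DecidableRel G.Adj] (γ δ : ℝ) (x : V → ℝ)
    (i j : V) : wt G γ δ x i j = if G.Adj i j then ω γ δ (x i - x j) else 0 :=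
  rfl

section Jacobian

variable {V : Type*} [Fintype V] (G : SimpleGraph V) [DecidableRel G.Adj] (γ δ : ℝ)

noncomputable def netInfluence (x : V → ℝ) (i : V) : ℝ := ∑ j, wt G γ δ x i j * (x j - x i)

noncomputable def strength (x : V → ℝ) (i : V) : ℝ := ∑ j, wt G γ δ x i j

noncomputable def linCoeff (x : V → ℝ) (i j : V) : ℝ :=
  if G.Adj i j then linWeight γ δ (x i - x j) else 0

theorem F_of_notMem [DecidableEq V] {Z : Finset V} {i : V} (hi : i ∉ Z) (x : V → ℝ) :
    F G Z γ δ x i = netInfluence G γ δ x i / strength G γ δ x i := by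
  simp only [F, if_neg hi, netInfluence, strength]

theorem differentiableAt_strength (x : V → ℝ) (i : V) :
    DifferentiableAt ℝ (fun y => strength G γ δ y i) x := by
  unfold strength
  refine DifferentiableAt.fun_sum fun k _ => ?_
  by_cases h : G.Adj i k
  · simp only [wt_apply, if_pos h]
    exact (hasDerivAt_ω γ δ _).differentiableAt.comp x (by fun_prop)
  · simp only [wt, if_neg h, differentiableAt_const]

theorem hasFDerivAt_netInfluence (x : V → ℝ) (i : V) :
    HasFDerivAt (fun y => netInfluence G γ δ y i)
      (∑ k, linCoeff G γ δ x i k •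
        ((ContinuousLinearMap.proj k : (V → ℝ) →L[ℝ] ℝ) - ContinuousLinearMap.proj i)) x := by
  unfold netInfluence
  refine HasFDerivAt.fun_sum fun k _ => ?_
  by_cases h : G.Adj i k
  · have hdiff : HasFDerivAt (fun y : V → ℝ => y i - y k)
        ((ContinuousLinearMap.proj i : (V → ℝ) →L[ℝ] ℝ) - ContinuousLinearMap.proj k) x :=
      (hasFDerivAt_apply i x).sub (hasFDerivAt_apply k x)
    have := ((hasDerivAt_mul_ω γ δ (x i - x k)).comp_hasFDerivAt x hdiff).neg
    convert this using 1
    · funext y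
      simp only [wt_apply, if_pos h, Pi.neg_apply, Function.comp_apply]
      ring
    · rw [linCoeff, if_pos h, ← smul_neg, neg_sub]
  · simp only [wt, linCoeff, if_neg h, zero_mul, zero_smul]
    exact hasFDerivAt_const 0 x

theorem Jp_apply_of_netInfluence_eq_zero [DecidableEq V] {Z : Finset V} {x : V → ℝ}
    (i j : {v : V // v ∉ Z}) (hN : netInfluence G γ δ x i = 0) (hS : strength G γ δ x i ≠ 0) :
    Jp G Z γ δ x i j =
      (linCoeff G γ δ x i j - if i = j then ∑ k, linCoeff G γ δ x i k else 0) /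
        strength G γ δ x i := by
  have hF : (fun y => F G Z γ δ y i) = fun y => netInfluence G γ δ y i / strength G γ δ y i :=
    funext (F_of_notMem G γ δ i.2)
  have := (hasFDerivAt_netInfluence G γ δ x i).div_of_eq_zero hN
    (differentiableAt_strength G γ δ x i) hS
  rw [Jp, hF, this.fderiv]
  simp [Pi.single_apply, mul_sub, Finset.sum_sub_distrib, Subtype.ext_iff, div_eq_inv_mul]

end Jacobian

theorem xbarBE_of_notMem {V : Type*} [DecidableEq V] {z₁ z₂ w : V}
    (hw : w ∉ ({z₁, z₂} : Finset V)) : xbarBE z₁ z₂ w = 0 := by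
  simp only [Finset.mem_insert, Finset.mem_singleton, not_or] at hw
  simp [xbarBE, hw.1, hw.2]

section Harmonic

variable {V : Type*} [Fintype V] [DecidableEq V] (G : SimpleGraph V) [DecidableRel G.Adj]
  {z₁ z₂ : V}

theorem sum_eq_add_add_sum_notMem_pair {M : Type*} [AddCommMonoid M] (hzz : z₁ ≠ z₂)
    (f : V → M) :
    ∑ k, f k = f z₁ + f z₂ + ∑ k : {v : V // v ∉ ({z₁, z₂} : Finset V)}, f k := by
  rw [← Finset.sum_add_sum_compl {z₁, z₂} f, Finset.sum_pair hzz,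
    Finset.sum_subtype _ (fun _ => Finset.mem_compl)]

theorem sum_adj_xbarBE (hzz : z₁ ≠ z₂)
    (hadj : ∀ i : V, i ∉ ({z₁, z₂} : Finset V) → G.Adj i z₁ ∧ G.Adj i z₂) {d : ℕ}
    (hreg : ∀ i : {v : V // v ∉ ({z₁, z₂} : Finset V)},
      (Finset.univ.filter fun k : {v : V // v ∉ ({z₁, z₂} : Finset V)} =>
        G.Adj i.1 k.1).card = d)
    (i : {v : V // v ∉ ({z₁, z₂} : Finset V)}) (h : ℝ → ℝ) :
    ∑ k, (if G.Adj i k then h (xbarBE z₁ z₂ i - xbarBE z₁ z₂ k) else 0) =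
      h 1 + h (-1) + d * h 0 := by
  have hP : ∀ k : {v : V // v ∉ ({z₁, z₂} : Finset V)},
      (if G.Adj i k then h (xbarBE z₁ z₂ i - xbarBE z₁ z₂ k) else 0) =
        if G.Adj i k then h 0 else 0 := fun k => by
    rw [xbarBE_of_notMem i.2, xbarBE_of_notMem k.2, sub_zero]
  rw [sum_eq_add_add_sum_notMem_pair hzz, Finset.sum_congr rfl fun k _ => hP k,
    ← Finset.sum_filter, Finset.sum_const, hreg i, nsmul_eq_mul, if_pos (hadj i i.2).1,
    if_pos (hadj i i.2).2, xbarBE_of_notMem i.2]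
  simp [xbarBE, hzz.symm]

variable (hzz : z₁ ≠ z₂)
    (hadj : ∀ i : V, i ∉ ({z₁, z₂} : Finset V) → G.Adj i z₁ ∧ G.Adj i z₂) {d : ℕ}
    (hreg : ∀ i : {v : V // v ∉ ({z₁, z₂} : Finset V)},
      (Finset.univ.filter fun k : {v : V // v ∉ ({z₁, z₂} : Finset V)} =>
        G.Adj i.1 k.1).card = d)
    (γ δ : ℝ) (i : {v : V // v ∉ ({z₁, z₂} : Finset V)})
include hzz hadj hreg

theorem netInfluence_xbarBE : netInfluence G γ δ (xbarBE z₁ z₂) i = 0 := by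
  have h : netInfluence G γ δ (xbarBE z₁ z₂) i = ∑ k, if G.Adj i k then
      -((xbarBE z₁ z₂ i - xbarBE z₁ z₂ k) * ω γ δ (xbarBE z₁ z₂ i - xbarBE z₁ z₂ k)) else 0 :=
    Finset.sum_congr rfl fun k _ => by rw [wt_apply]; split_ifs <;> ring
  rw [h, sum_adj_xbarBE G hzz hadj hreg i (fun r => -(r * ω γ δ r)), ω_neg]
  ring

theorem strength_xbarBE :
    strength G γ δ (xbarBE z₁ z₂) i = 2 * ω γ δ 1 + d * ω γ δ 0 := by
  rw [strength, Finset.sum_congr rfl fun k _ => wt_apply G γ δ _ i k,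
    sum_adj_xbarBE G hzz hadj hreg i, ω_neg]
  ring

theorem sum_linCoeff_xbarBE :
    ∑ k, linCoeff G γ δ (xbarBE z₁ z₂) i k = 2 * linWeight γ δ 1 + d * ω γ δ 0 := by
  simp only [linCoeff]
  rw [sum_adj_xbarBE G hzz hadj hreg i, linWeight_neg, linWeight_zero]
  ring

theorem Jp_xbarBE :
    Jp G {z₁, z₂} γ δ (xbarBE z₁ z₂) =
      (-(2 * ω γ δ 1 + d * ω γ δ 0)⁻¹) •
        ((2 * linWeight γ δ 1) • (1 : Matrix _ _ ℝ) + ω γ δ 0 • Lp G {z₁, z₂}) := by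
  ext i j
  have hs : 0 < 2 * ω γ δ 1 + d * ω γ δ 0 := by
    have := ω_pos γ δ 1; have := ω_pos γ δ 0; positivity
  have hc : linCoeff G γ δ (xbarBE z₁ z₂) i j = if G.Adj i j then ω γ δ 0 else 0 := by
    rw [linCoeff, xbarBE_of_notMem i.2, xbarBE_of_notMem j.2, sub_zero, linWeight_zero]
  rw [Jp_apply_of_netInfluence_eq_zero G γ δ i j (netInfluence_xbarBE G hzz hadj hreg γ δ i)
      (by rw [strength_xbarBE G hzz hadj hreg]; exact hs.ne'),
    strength_xbarBE G hzz hadj hreg, sum_linCoeff_xbarBE G hzz hadj hreg, hc]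
  simp only [Lp, hreg i, Matrix.smul_apply, Matrix.add_apply, Matrix.one_apply, smul_eq_mul]
  field_simp
  split_ifs <;> ring

end Harmonic

section Eigenvalues

variable {n : Type*} [Fintype n] {M : Matrix n n ℝ}

theorem HasEig.mem_spectrum [DecidableEq n] {μ : ℝ} (h : HasEig M μ) : μ ∈ spectrum ℝ M := by
  obtain ⟨φ, hφ, he⟩ := h
  rw [← Matrix.spectrum_toLin', ← Module.End.hasEigenvalue_iff_mem_spectrum]
  exact Module.End.hasEigenvalue_of_hasEigenvector
    ⟨Module.End.mem_eigenspace_iff.mpr (by rwa [Matrix.toLin'_apply]), hφ⟩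

theorem setOf_hasEig_finite [DecidableEq n] (M : Matrix n n ℝ) : {μ | HasEig M μ}.Finite :=
  (Matrix.finite_spectrum M).subset fun _ => HasEig.mem_spectrum

theorem HasEig.nonneg_of_posSemidef {μ : ℝ} (hM : M.PosSemidef) (h : HasEig M μ) : 0 ≤ μ := by
  obtain ⟨φ, hφ, he⟩ := h
  have hq := hM.dotProduct_mulVec_nonneg φ
  rw [he, dotProduct_smul, smul_eq_mul] at hq
  exact (mul_nonneg_iff_of_pos_right (Matrix.dotProduct_star_self_pos_iff.mpr hφ)).mp hq

theorem HasEig.exists_of_smul_add_smul [DecidableEq n] {a b c μ : ℝ} (hb : b ≠ 0) (hc : c ≠ 0)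
    (h : HasEig (c • (a • (1 : Matrix n n ℝ) + b • M)) μ) :
    ∃ lam, HasEig M lam ∧ μ = c * (a + b * lam) := by
  obtain ⟨φ, hφ, he⟩ := h
  refine ⟨(μ / c - a) / b, ⟨φ, hφ, ?_⟩, by field_simp; ring⟩
  funext k
  have hk := congrFun he k
  simp only [Matrix.smul_mulVec, Matrix.add_mulVec, Matrix.one_mulVec, Pi.smul_apply,
    Pi.add_apply, smul_eq_mul] at hk ⊢
  field_simp
  linear_combination hk

end Eigenvalues

theorem Lp_eq_lapMatrix {V : Type*} [Fintype V] [DecidableEq V] (G : SimpleGraph V)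
    [DecidableRel G.Adj] (Z : Finset V) :
    Lp G Z = (G.comap (Subtype.val : {v : V // v ∉ Z} → V)).lapMatrix ℝ := by
  ext i j
  simp [Lp, SimpleGraph.lapMatrix, SimpleGraph.degMatrix, Matrix.diagonal_apply,
    ← SimpleGraph.card_neighborFinset_eq_degree, SimpleGraph.neighborFinset_eq_filter]

theorem HasEig.Lp_nonneg {V : Type*} [Fintype V] [DecidableEq V] {G : SimpleGraph V}
    [DecidableRel G.Adj] {Z : Finset V} {lam : ℝ} (h : HasEig (Lp G Z) lam) : 0 ≤ lam := by
  rw [Lp_eq_lapMatrix] at h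
  exact h.nonneg_of_posSemidef (SimpleGraph.posSemidef_lapMatrix ℝ _)

section Asymptotics

open Filter Topology

theorem ω_one (γ δ : ℝ) : ω γ δ 1 = 1 / (1 + Real.exp (γ * (1 - δ))) := by
  rw [ω]; congr 3; ring

theorem ω_zero (γ δ : ℝ) : ω γ δ 0 = 1 / (1 + Real.exp (-(γ * δ))) := by
  rw [ω]; congr 3; ring

theorem ω_le_exp (γ δ r : ℝ) : ω γ δ r ≤ Real.exp (-(γ * r ^ 2 - γ * δ)) := by
  rw [ω, Real.exp_neg, one_div]
  exact inv_anti₀ (Real.exp_pos _) (by linarith [Real.exp_pos (γ * r ^ 2 - γ * δ)])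

theorem one_sub_ω_le_exp (γ δ r : ℝ) : 1 - ω γ δ r ≤ Real.exp (γ * r ^ 2 - γ * δ) := by
  rw [one_sub_ω]
  exact mul_le_of_le_one_right (Real.exp_pos _).le (ω_lt_one γ δ r).le

theorem neg_linWeight_le {γ : ℝ} (hγ : 0 ≤ γ) (δ r : ℝ) :
    -linWeight γ δ r ≤ 2 * γ * r ^ 2 * ω γ δ r := by
  have := ω_pos γ δ r
  rw [linWeight]
  nlinarith [mul_nonneg (mul_nonneg hγ (sq_nonneg r)) (mul_nonneg this.le this.le)]

theorem tendsto_mul_exp_neg_mul_atTop {c : ℝ} (hc : 0 < c) :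
    Tendsto (fun γ : ℝ => γ * Real.exp (-(c * γ))) atTop (𝓝 0) := by
  simpa [neg_mul] using tendsto_rpow_mul_exp_neg_mul_atTop_nhds_zero 1 c hc

theorem eventually_linWeight_one_pos {δ : ℝ} (hδ : 1 < δ) :
    ∀ᶠ γ in atTop, 0 < linWeight γ δ 1 := by
  have hlim := (tendsto_mul_exp_neg_mul_atTop (sub_pos.mpr hδ)).const_mul 2
  rw [mul_zero] at hlim
  filter_upwards [hlim.eventually (eventually_lt_nhds one_pos), eventually_ge_atTop 0]
    with γ hγ hγ0
  have hb := one_sub_ω_le_exp γ δ 1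
  rw [show γ * 1 ^ 2 - γ * δ = -((δ - 1) * γ) by ring] at hb
  rw [linWeight]
  refine mul_pos (ω_pos γ δ 1) ?_
  nlinarith [mul_le_mul_of_nonneg_left hb hγ0]

theorem eventually_le_neg_linWeight_div_of_eq_one (lam : ℝ) :
    ∀ᶠ γ in atTop, lam ≤ -(2 * linWeight γ 1 1) / ω γ 1 0 := by
  filter_upwards [eventually_ge_atTop (max 1 (lam + 1))] with γ hγ
  have hv : ω γ 1 1 = 1 / 2 := by rw [ω_one]; norm_num
  have hthr : -(2 * linWeight γ 1 1) = γ - 1 := by rw [linWeight, hv]; ring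
  rw [hthr]
  calc lam ≤ γ - 1 := by linarith [le_max_right 1 (lam + 1)]
    _ ≤ (γ - 1) / ω γ 1 0 :=
      le_div_self (by linarith [le_max_left 1 (lam + 1)]) (ω_pos γ 1 0) (ω_lt_one γ 1 0).le

theorem eventually_neg_linWeight_div_lt {δ ε : ℝ} (hδ : δ < 1) (hε : 0 < ε) :
    ∀ᶠ γ in atTop, -(2 * linWeight γ δ 1) / ω γ δ 0 < ε := by
  have hlim := ((tendsto_mul_exp_neg_mul_atTop (sub_pos.mpr hδ)).add
    (tendsto_mul_exp_neg_mul_atTop one_pos)).const_mul 4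
  rw [add_zero, mul_zero] at hlim
  filter_upwards [hlim.eventually (eventually_lt_nhds hε), eventually_ge_atTop 0] with γ hγ hγ0
  refine lt_of_le_of_lt ?_ hγ
  have hv := ω_le_exp γ δ 1
  rw [show -(γ * 1 ^ 2 - γ * δ) = -((1 - δ) * γ) by ring] at hv
  have hu : (ω γ δ 0)⁻¹ = 1 + Real.exp (-(γ * δ)) := by rw [ω_zero, one_div, inv_inv]
  have hprod : Real.exp (-((1 - δ) * γ)) * Real.exp (-(γ * δ)) = Real.exp (-(1 * γ)) := by
    rw [← Real.exp_add]; ring_nf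
  have hlin := neg_linWeight_le hγ0 δ 1
  have he := Real.exp_pos (-(γ * δ))
  rw [div_eq_mul_inv, hu]
  nlinarith [mul_le_mul_of_nonneg_right hv he.le, ω_pos γ δ 1]

end Asymptotics

end SBCM

theorem stmt_19_general {V : Type*} [Fintype V] [DecidableEq V]
    (G : SimpleGraph V) [DecidableRel G.Adj] (z₁ z₂ : V) (hzz : z₁ ≠ z₂)
    (hadj : ∀ i : V, i ∉ ({z₁, z₂} : Finset V) → G.Adj i z₁ ∧ G.Adj i z₂)
    (d : ℕ)
    (hreg : ∀ i : {v : V // v ∉ ({z₁, z₂} : Finset V)},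
      (Finset.univ.filter fun k : {v : V // v ∉ ({z₁, z₂} : Finset V)} =>
        G.Adj i.1 k.1).card = d)
    (δ : ℝ) :
    ((1 < δ) → ∃ Γ : ℝ, ∀ γ : ℝ, Γ < γ →
      SBCM.LinStable (SBCM.Jp G ({z₁, z₂} : Finset V) γ δ (SBCM.xbarBE z₁ z₂))) ∧
    ((δ = 1) → ∀ lam : ℝ,
      SBCM.HasEig (SBCM.Lp G ({z₁, z₂} : Finset V)) lam →
      ∃ Γ : ℝ, ∀ γ : ℝ, Γ < γ →
        lam ≤ -(2 * (1 / (1 + Real.exp (γ * (1 - δ)))) *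
            (1 - 2 * γ * (1 - 1 / (1 + Real.exp (γ * (1 - δ)))))) /
          (1 / (1 + Real.exp (-(γ * δ))))) ∧
    ((δ < 1) → ∃ Γ : ℝ, ∀ γ : ℝ, Γ < γ →
      ∀ lam : ℝ, SBCM.HasEig (SBCM.Lp G ({z₁, z₂} : Finset V)) lam →
        lam ≤ -(2 * (1 / (1 + Real.exp (γ * (1 - δ)))) *
            (1 - 2 * γ * (1 - 1 / (1 + Real.exp (γ * (1 - δ)))))) /
          (1 / (1 + Real.exp (-(γ * δ)))) →
        lam = 0) := by
  have hthr : ∀ γ, -(2 * (1 / (1 + Real.exp (γ * (1 - δ)))) *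
      (1 - 2 * γ * (1 - 1 / (1 + Real.exp (γ * (1 - δ)))))) / (1 / (1 + Real.exp (-(γ * δ)))) =
      -(2 * SBCM.linWeight γ δ 1) / SBCM.ω γ δ 0 := fun γ => by
    rw [← SBCM.ω_one, ← SBCM.ω_zero, SBCM.linWeight]; ring
  simp only [hthr]
  refine ⟨fun hδ => ?_, fun hδ lam _ => ?_, fun hδ => ?_⟩
  · obtain ⟨Γ, hΓ⟩ := (SBCM.eventually_linWeight_one_pos hδ).exists_forall_of_atTop
    refine ⟨Γ, fun γ hγ μ hμ => ?_⟩
    have hu := SBCM.ω_pos γ δ 0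
    have hs : 0 < 2 * SBCM.ω γ δ 1 + d * SBCM.ω γ δ 0 := by
      have := SBCM.ω_pos γ δ 1; positivity
    rw [SBCM.Jp_xbarBE G hzz hadj hreg] at hμ
    obtain ⟨lam, hlam, rfl⟩ := hμ.exists_of_smul_add_smul hu.ne' (by simpa using hs.ne')
    refine mul_neg_of_neg_of_pos (by simpa using hs) ?_
    nlinarith [hΓ γ hγ.le, mul_nonneg hu.le hlam.Lp_nonneg]
  · subst hδ
    exact (SBCM.eventually_le_neg_linWeight_div_of_eq_one lam).exists_forall_of_atTop.imp
      fun Γ hΓ γ hγ => hΓ γ hγ.le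
  · have hzero : ∀ᶠ γ in atTop, ∀ lam ∈ {lam | SBCM.HasEig (SBCM.Lp G {z₁, z₂}) lam},
        lam ≤ -(2 * SBCM.linWeight γ δ 1) / SBCM.ω γ δ 0 → lam = 0 := by
      refine (SBCM.setOf_hasEig_finite _).eventually_all.mpr fun lam hlam => ?_
      rcases hlam.Lp_nonneg.eq_or_lt with h0 | hpos
      · exact .of_forall fun _ _ => h0.symm
      · filter_upwards [SBCM.eventually_neg_linWeight_div_lt hδ hpos] with γ hγ hle
        exact absurd hle hγ.not_ge
    obtain ⟨Γ, hΓ⟩ := hzero.exists_forall_of_atTop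
    exact ⟨Γ, fun γ hγ => hΓ γ hγ.le⟩

/-- With two zealots of opinions `−1, +1`, every persuadable node adjacent
to both, and a `d`-regular persuadable subgraph with Laplacian `L_𝒫` (writing
`u = ω(0)`, `v = ω(1)`, which depend on `γ`): (1) if `δ > 1` the harmonic state is
linearly stable for all sufficiently large `γ`; (2) if `δ = 1`, every eigenvalue `λ`
of `L_𝒫` eventually satisfies `λ ≤ −2v(1 − 2γ(1 − v))/u`; (3) if `δ < 1`, eventually
the only eigenvalue of `L_𝒫` satisfying that bound is `λ = 0`. -/
theorem stmt_19 {V : Type*} [Fintype V] [DecidableEq V]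
    (G : SimpleGraph V) [DecidableRel G.Adj] (z₁ z₂ : V) (hzz : z₁ ≠ z₂)
    (hadj : ∀ i : V, i ∉ ({z₁, z₂} : Finset V) → G.Adj i z₁ ∧ G.Adj i z₂)
    (d : ℕ)
    (hreg : ∀ i : {v : V // v ∉ ({z₁, z₂} : Finset V)},
      (Finset.univ.filter fun k : {v : V // v ∉ ({z₁, z₂} : Finset V)} =>
        G.Adj i.1 k.1).card = d)
    (δ : ℝ) (hδ : 0 ≤ δ) :
    ((1 < δ) → ∃ Γ : ℝ, ∀ γ : ℝ, Γ < γ →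
      SBCM.LinStable (SBCM.Jp G ({z₁, z₂} : Finset V) γ δ (SBCM.xbarBE z₁ z₂))) ∧
    ((δ = 1) → ∀ lam : ℝ,
      SBCM.HasEig (SBCM.Lp G ({z₁, z₂} : Finset V)) lam →
      ∃ Γ : ℝ, ∀ γ : ℝ, Γ < γ →
        lam ≤ -(2 * (1 / (1 + Real.exp (γ * (1 - δ)))) *
            (1 - 2 * γ * (1 - 1 / (1 + Real.exp (γ * (1 - δ)))))) /
          (1 / (1 + Real.exp (-(γ * δ))))) ∧
    ((δ < 1) → ∃ Γ : ℝ, ∀ γ : ℝ, Γ < γ →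
      ∀ lam : ℝ, SBCM.HasEig (SBCM.Lp G ({z₁, z₂} : Finset V)) lam →
        lam ≤ -(2 * (1 / (1 + Real.exp (γ * (1 - δ)))) *
            (1 - 2 * γ * (1 - 1 / (1 + Real.exp (γ * (1 - δ)))))) /
          (1 / (1 + Real.exp (-(γ * δ)))) →
        lam = 0) :=
  stmt_19_general G z₁ z₂ hzz hadj d hreg δ
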